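/- Let Û be a real T×n matrix and V̂ a real T×m matrix with V̂ᵀV̂ invertible, and set B̂ = (V̂ᵀV̂)⁻¹V̂ᵀÛ. Then for every real m×n matrix B, det[(Û − V̂B)ᵀ(Û − V̂B)] ≥ det[(Û − V̂B̂)ᵀ(Û − V̂B̂)]; that is, the unrestricted OLS estimator B̂ minimizes the determinant of the residual cross-product matrix over all coefficient matrices B. -/

import Mathlib

open Matrix

private lemma psd_det_nonneg {k : ℕ} {A : Matrix (Fin k) (Fin k) ℝ}
    (hA : A.PosSemidef) : 0 ≤ A.det := by
  rw [hA.1.det_eq_prod_eigenvalues]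
  exact Finset.prod_nonneg fun i _ => hA.eigenvalues_nonneg i

private lemma det_one_add_psd {k : ℕ} {M : Matrix (Fin k) (Fin k) ℝ}
    (hM : M.PosSemidef) : 1 ≤ (1 + M).det := by
  have hH := hM.1
  have hU := (Matrix.mem_unitaryGroup_iff).mp (hH.eigenvectorUnitary).2
  have hU' := (Matrix.mem_unitaryGroup_iff').mp (hH.eigenvectorUnitary).2
  have h2 : 1 + M =
      (hH.eigenvectorUnitary : Matrix (Fin k) (Fin k) ℝ) *
        (1 + diagonal (RCLike.ofReal ∘ hH.eigenvalues)) *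
        (star (hH.eigenvectorUnitary : Matrix (Fin k) (Fin k) ℝ)) := by
    rw [mul_add, mul_one, add_mul, hU, ← Unitary.conjStarAlgAut_apply (S := ℝ), ← hH.spectral_theorem]
  rw [h2, det_mul, det_mul, mul_comm, ← mul_assoc, ← det_mul, hU', det_one, one_mul]
  have hd : (1 : Matrix (Fin k) (Fin k) ℝ) + diagonal (RCLike.ofReal ∘ hH.eigenvalues)
      = diagonal (fun i => 1 + hH.eigenvalues i) := by
    rw [← diagonal_one, diagonal_add]
    congr 1
  rw [hd, det_diagonal]
  calc (1:ℝ) = ∏ _i : Fin k, 1 := by simp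
    _ ≤ ∏ i : Fin k, (1 + hH.eigenvalues i) :=
        Finset.prod_le_prod (fun i _ => zero_le_one)
          (fun i _ => by linarith [hM.eigenvalues_nonneg i])

private lemma psd_det_add {k : ℕ} {A B : Matrix (Fin k) (Fin k) ℝ}
    (hA : A.PosSemidef) (hB : B.PosSemidef) : A.det ≤ (A + B).det := by
  rcases eq_or_lt_of_le (psd_det_nonneg hA) with h0 | h0
  · rw [← h0]
    exact psd_det_nonneg (hA.add hB)
  · set S := (open MatrixOrder in CFC.sqrt A) with hSdef
    have hSpsd : S.PosSemidef := (open MatrixOrder in (CFC.sqrt_nonneg A).posSemidef)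
    have hSS : S * S = A := (open MatrixOrder in CFC.sqrt_mul_sqrt_self A hA.nonneg)
    have hdet2 : S.det * S.det = A.det := by rw [← det_mul, hSS]
    have hnn : 0 ≤ S.det := psd_det_nonneg hSpsd
    have hdetS : 0 < S.det := by nlinarith
    have hSunit : IsUnit S.det := (hdetS.ne').isUnit
    have hSH : Sᴴ = S := hSpsd.1
    have hSinvH : (S⁻¹)ᴴ = S⁻¹ := by
      rw [conjTranspose_nonsing_inv, hSH]
    have hMpsd : ((S⁻¹)ᴴ * B * S⁻¹).PosSemidef := hB.conjTranspose_mul_mul_same S⁻¹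
    rw [hSinvH] at hMpsd
    have hmid : S * (S⁻¹ * B * S⁻¹) * S = B := by
      rw [show S * (S⁻¹ * B * S⁻¹) * S = (S * S⁻¹) * B * (S⁻¹ * S) by noncomm_ring,
        mul_nonsing_inv _ hSunit, nonsing_inv_mul _ hSunit, one_mul, mul_one]
    have key : A + B = S * (1 + S⁻¹ * B * S⁻¹) * S := by
      rw [mul_add, mul_one, add_mul, hSS, hmid]
    rw [key, det_mul, det_mul]
    calc A.det = S.det * 1 * S.det := by
          rw [mul_one, ← det_mul, hSS]
      _ ≤ S.det * (1 + S⁻¹ * B * S⁻¹).det * S.det :=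
          mul_le_mul_of_nonneg_right
            (mul_le_mul_of_nonneg_left (det_one_add_psd hMpsd) hdetS.le) hdetS.le

/-- The unrestricted OLS estimator minimizes the generalized variance: if `V̂ᵀV̂` is
invertible and `B̂ = (V̂ᵀV̂)⁻¹V̂ᵀÛ`, then for every `m×n` matrix `B`,
`det[(Û − V̂B̂)ᵀ(Û − V̂B̂)] ≤ det[(Û − V̂B)ᵀ(Û − V̂B)]`. -/
theorem ols_minimizes_generalized_variance (T n m : ℕ)
    (Uhat : Matrix (Fin T) (Fin n) ℝ) (Vhat : Matrix (Fin T) (Fin m) ℝ)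
    (hV : IsUnit (Vhatᵀ * Vhat))
    (Bhat : Matrix (Fin m) (Fin n) ℝ) (hBhat : Bhat = (Vhatᵀ * Vhat)⁻¹ * Vhatᵀ * Uhat) :
    ∀ B : Matrix (Fin m) (Fin n) ℝ,
      ((Uhat - Vhat * Bhat)ᵀ * (Uhat - Vhat * Bhat)).det ≤
        ((Uhat - Vhat * B)ᵀ * (Uhat - Vhat * B)).det := by
  intro B
  have hVdet : IsUnit (Vhatᵀ * Vhat).det := (isUnit_iff_isUnit_det _).mp hV
  set R := Uhat - Vhat * Bhat with hR
  set D := Bhat - B with hD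
  have horth : Vhatᵀ * R = 0 := by
    rw [hR, hBhat, Matrix.mul_sub]
    rw [show Vhatᵀ * (Vhat * ((Vhatᵀ * Vhat)⁻¹ * Vhatᵀ * Uhat))
        = (Vhatᵀ * Vhat) * (Vhatᵀ * Vhat)⁻¹ * (Vhatᵀ * Uhat) by
      simp only [Matrix.mul_assoc]]
    rw [mul_nonsing_inv _ hVdet]
    simp
  have hRV : Rᵀ * Vhat = 0 := by
    have := congrArg conjTranspose horth
    simpa [conjTranspose_mul] using this
  have hdecomp : Uhat - Vhat * B = R + Vhat * D := by
    rw [hR, hD, Matrix.mul_sub]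
    abel
  have e1 : Rᵀ * (Vhat * D) = 0 := by
    rw [← Matrix.mul_assoc, hRV, Matrix.zero_mul]
  have e2 : Dᵀ * Vhatᵀ * R = 0 := by
    rw [Matrix.mul_assoc, horth, Matrix.mul_zero]
  have hexp : (Uhat - Vhat * B)ᵀ * (Uhat - Vhat * B)
      = Rᵀ * R + (Vhat * D)ᵀ * (Vhat * D) := by
    rw [hdecomp, transpose_add, Matrix.add_mul, Matrix.mul_add, Matrix.mul_add, transpose_mul, e1, e2]
    simp
  rw [hexp]
  exact psd_det_add (posSemidef_conjTranspose_mul_self R)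
    (posSemidef_conjTranspose_mul_self _)
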